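/- For any n ∈ ℕ and any A > 0, there exists f ∈ C^1 ∩ Δ^(0)({0}) such that, for every polynomial P_n of degree ≤ n which is nonnegative on (0, 1/n) and satisfies P_n(0) = f(0) and P_n'(0) = f'(0), one has ‖f - P_n‖ > A ω₃(f', 1). Hence copositive approximation with first-order Hermite interpolation at the sign-change point 0 cannot achieve the rate ω₃(f', 1). -/

import Mathlib

/-- The `k`-th modulus of smoothness of `g` with step bound `t` on `[a,b]`. -/
noncomputable def omegaK (g : ℝ → ℝ) (k : ℕ) (t a b : ℝ) : ℝ :=
  sSup {v : ℝ | ∃ h x : ℝ, 0 < h ∧ h ≤ t ∧ a ≤ x ∧ x + (k : ℝ) * h ≤ b ∧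
    v = |∑ i ∈ Finset.range (k + 1),
      (-1 : ℝ) ^ (k - i) * (k.choose i : ℝ) * g (x + (i : ℝ) * h)|}

/-- The sup norm of `g` on `[a,b]`. -/
noncomputable def supNorm (g : ℝ → ℝ) (a b : ℝ) : ℝ :=
  sSup ((fun x => |g x|) '' Set.Icc a b)

/-- `g ∈ Δ^(0)({0})`: `g ≤ 0` on `[-1,0]` and `g ≥ 0` on `[0,1]`. -/
def Delta0Zero (g : ℝ → ℝ) : Prop :=
  (∀ x ∈ Set.Icc (-1 : ℝ) 0, g x ≤ 0) ∧ (∀ x ∈ Set.Icc (0 : ℝ) 1, 0 ≤ g x)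

/-!
For small `x₀ > 0` take `f x = x * ((x - x₀)² - 2 x₀⁻² m(x)²)` with `m(x) = (x₀²/4 - x²)₊`.
Outside `(-x₀/2, x₀/2)` it is the cubic `x (x - x₀)²`, whose derivative is quadratic, so
`ω₃(f', 1)` only sees the bump and is `O(x₀²)`; the bump lowers `f'(0)` by `μ = x₀²/8`.
If `P` matches `f` and `f'` at `0`, then `P - x (x - x₀)² + μ x = x² D` with `deg D ≤ n`.
Positivity of `P` at `x₀` forces `D(x₀) ≥ x₀/8`, while at the nodes `-(j+1)/(n+1)`, where `f` is
the cubic, `|D| ≤ (n+1)² ‖f - P‖ + (n+1) μ`. Lagrange interpolation at these nodes bounds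
`D(x₀)` by a constant `C_n` times this, so `‖f - P‖ ≳ x₀ / C_n`, which beats `4 A x₀²` once
`x₀` is small.
-/

open Set Filter Topology

lemma hasDerivAt_max_zero_sq (t : ℝ) :
    HasDerivAt (fun s : ℝ => max s 0 ^ 2) (2 * max t 0) t := by
  have hcont : Continuous fun s : ℝ => max s 0 := continuous_id.max continuous_const
  refine hasDerivAt_of_hasDerivAt_of_ne' (f := fun s => max s 0 ^ 2) (g := fun s => 2 * max s 0)
    (x := 0) (fun y hy => ?_) (hcont.pow 2).continuousAt (continuous_const.mul hcont).continuousAt t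
  rcases hy.lt_or_gt with hy | hy
  · have h : (fun s : ℝ => max s 0 ^ 2) =ᶠ[𝓝 y] fun _ => 0 := by
      filter_upwards [Iio_mem_nhds hy] with s hs
      simp [max_eq_right (le_of_lt (mem_Iio.mp hs))]
    simpa [max_eq_right hy.le] using (hasDerivAt_const y (0 : ℝ)).congr_of_eventuallyEq h
  · have h : (fun s : ℝ => max s 0 ^ 2) =ᶠ[𝓝 y] fun s => s ^ 2 := by
      filter_upwards [Ioi_mem_nhds hy] with s hs
      simp [max_eq_left (le_of_lt (mem_Ioi.mp hs))]
    simpa [max_eq_left hy.le] using (hasDerivAt_pow 2 y).congr_of_eventuallyEq h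

lemma contDiff_max_zero_sq : ContDiff ℝ 1 fun s : ℝ => max s 0 ^ 2 :=
  contDiff_one_iff_deriv.mpr ⟨fun s => (hasDerivAt_max_zero_sq s).differentiableAt,
    by rw [funext fun s => (hasDerivAt_max_zero_sq s).deriv]
       exact continuous_const.mul (continuous_id.max continuous_const)⟩

lemma omegaK_le {g : ℝ → ℝ} {k : ℕ} {t a b M : ℝ} (hM : 0 ≤ M)
    (h : ∀ h x : ℝ, 0 < h → h ≤ t → a ≤ x → x + k * h ≤ b →
      |∑ i ∈ Finset.range (k + 1), (-1 : ℝ) ^ (k - i) * (k.choose i : ℝ) * g (x + i * h)| ≤ M) :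
    omegaK g k t a b ≤ M :=
  Real.sSup_le (by rintro _ ⟨h', x, h0, ht, ha, hb, rfl⟩; exact h h' x h0 ht ha hb) hM

lemma sum_range_four_thirdDifference (g : ℝ → ℝ) (x h : ℝ) :
    ∑ i ∈ Finset.range (3 + 1), (-1 : ℝ) ^ (3 - i) * ((3).choose i : ℝ) * g (x + i * h)
      = g (x + 3 * h) - 3 * g (x + 2 * h) + 3 * g (x + h) - g x := by
  simp only [Finset.sum_range_succ, Finset.sum_range_zero]
  norm_num
  ring

lemma abs_le_supNorm {g : ℝ → ℝ} {a b x : ℝ} (hg : ContinuousOn g (Icc a b))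
    (hx : x ∈ Icc a b) : |g x| ≤ supNorm g a b :=
  le_csSup (isCompact_Icc.bddAbove_image hg.abs) ⟨x, hx, rfl⟩

lemma le_of_sq_mul_le {κ t d E μ : ℝ} (hE : 0 ≤ E) (hμ : 0 ≤ μ) (ht : 0 < t) (hκt : 1 ≤ κ * t)
    (h : t ^ 2 * d ≤ E + μ * t) : d ≤ κ ^ 2 * E + κ * μ := by
  have hK : E + μ * t ≤ t ^ 2 * (κ ^ 2 * E + κ * μ) := by
    have h1 : 1 ≤ (κ * t) ^ 2 := one_le_pow₀ hκt
    nlinarith [mul_le_mul_of_nonneg_left h1 hE, mul_le_mul_of_nonneg_left hκt (mul_nonneg hμ ht.le)]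
  exact le_of_mul_le_mul_left (h.trans hK) (pow_pos ht 2)

section Interpolation

open Polynomial

lemma X_sq_dvd_of_eval_zero {R : Type*} [CommSemiring R] {p : R[X]} (h₀ : p.eval 0 = 0)
    (h₁ : (derivative p).eval 0 = 0) : X ^ 2 ∣ p := by
  refine X_pow_dvd_iff.mpr fun d hd => ?_
  interval_cases d
  · rwa [coeff_zero_eq_eval_zero]
  · simpa [← coeff_zero_eq_eval_zero, coeff_derivative] using h₁

lemma abs_eval_le_of_abs_eval_nodes_le {ι : Type*} {s : Finset ι} {v : ι → ℝ} {p : ℝ[X]}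
    (hp : p.degree < s.card) {δ L M x : ℝ} (hδ : 0 < δ)
    (hsep : ∀ i ∈ s, ∀ j ∈ s, i ≠ j → δ ≤ |v i - v j|)
    (hx : ∀ i ∈ s, |x - v i| ≤ L) (hM : ∀ i ∈ s, |p.eval (v i)| ≤ M) :
    |p.eval x| ≤ s.card * ((L / δ) ^ (s.card - 1) * M) := by
  classical
  have hinj : Set.InjOn v s := fun i hi j hj hij => by
    by_contra hne
    have := hsep i hi j hj hne
    rw [hij, sub_self, abs_zero] at this
    linarith
  have hbasis : ∀ j ∈ s, |(Lagrange.basis s v j).eval x| ≤ (L / δ) ^ (s.card - 1) := by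
    intro j hj
    rw [Lagrange.basis, eval_prod, Finset.abs_prod, ← Finset.card_erase_of_mem hj,
      ← Finset.prod_const]
    refine Finset.prod_le_prod (fun _ _ => abs_nonneg _) fun i hi => ?_
    obtain ⟨hij, hi⟩ := Finset.mem_erase.mp hi
    rw [Lagrange.basisDivisor, eval_mul, eval_C, eval_sub, eval_X, eval_C, abs_mul, abs_inv,
      inv_mul_eq_div]
    exact div_le_div₀ ((abs_nonneg _).trans (hx i hi)) (hx i hi) hδ (hsep j hj i hi (Ne.symm hij))
  rw [Lagrange.eq_interpolate hinj hp, Lagrange.interpolate_apply, eval_finsetSum]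
  calc |∑ j ∈ s, eval x (C (p.eval (v j)) * Lagrange.basis s v j)|
      ≤ ∑ j ∈ s, |p.eval (v j)| * |(Lagrange.basis s v j).eval x| := by
        refine (Finset.abs_sum_le_sum_abs _ _).trans_eq (Finset.sum_congr rfl fun j _ => ?_)
        rw [eval_mul, eval_C, abs_mul]
    _ ≤ ∑ _j ∈ s, (L / δ) ^ (s.card - 1) * M := Finset.sum_le_sum fun j hj => by
        rw [mul_comm]
        exact mul_le_mul (hbasis j hj) (hM j hj) (abs_nonneg _)
          (pow_nonneg (div_nonneg ((abs_nonneg _).trans (hx j hj)) hδ.le) _)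
    _ = _ := by rw [Finset.sum_const, nsmul_eq_mul]

lemma abs_eval_le_of_abs_eval_neg_nodes_le {n : ℕ} {p : ℝ[X]} (hp : p.natDegree ≤ n) {M x : ℝ}
    (hx : x ∈ Icc (-1 : ℝ) 1) (hM : ∀ j ≤ n, |p.eval (-((j : ℝ) + 1) / (n + 1))| ≤ M) :
    |p.eval x| ≤ (n + 1) * ((2 * (n + 1)) ^ n * M) := by
  have hκ : (0 : ℝ) < n + 1 := by positivity
  have h := abs_eval_le_of_abs_eval_nodes_le (s := Finset.range (n + 1))
    (v := fun j : ℕ => -(j + 1) / (n + 1)) (p := p) (δ := 1 / (n + 1)) (L := 2) (M := M) (x := x)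
    ?_ (by positivity) ?_ ?_ (fun j hj => hM j (Finset.mem_range_succ_iff.mp hj))
  · simpa [div_div_eq_mul_div] using h
  · rw [Finset.card_range]
    exact (degree_le_natDegree).trans_lt (by exact_mod_cast Nat.lt_succ_of_le hp)
  · intro i _ j _ hij
    have hij : (1 : ℝ) ≤ |(j : ℝ) - i| := by
      exact_mod_cast Int.one_le_abs (sub_ne_zero.mpr (by exact_mod_cast hij.symm : (j : ℤ) ≠ i))
    rw [← sub_div, abs_div, abs_of_pos hκ, div_le_div_iff_of_pos_right hκ]
    rwa [show -((i : ℝ) + 1) - -((j : ℝ) + 1) = j - i by ring]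
  · intro j hj
    have hj : (j : ℝ) ≤ n := by exact_mod_cast Finset.mem_range_succ_iff.mp hj
    have hv₀ : -((j : ℝ) + 1) / (n + 1) ≤ 0 := div_nonpos_of_nonpos_of_nonneg (by linarith) hκ.le
    have hv₁ : -1 ≤ -((j : ℝ) + 1) / (n + 1) := by rw [le_div_iff₀ hκ]; linarith
    rw [abs_le]
    constructor <;> linarith [hx.1, hx.2]

end Interpolation

noncomputable def bump (x₀ x : ℝ) : ℝ := max (x₀ ^ 2 / 4 - x ^ 2) 0

noncomputable def counterexample (x₀ x : ℝ) : ℝ :=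
  x * ((x - x₀) ^ 2 - 2 / x₀ ^ 2 * bump x₀ x ^ 2)

noncomputable def counterexampleDeriv (x₀ x : ℝ) : ℝ :=
  3 * x ^ 2 - 4 * x₀ * x + x₀ ^ 2 - 2 / x₀ ^ 2 * (bump x₀ x ^ 2 - 4 * x ^ 2 * bump x₀ x)

lemma bump_nonneg (x₀ x : ℝ) : 0 ≤ bump x₀ x := le_max_right _ _

lemma bump_le (x₀ x : ℝ) : bump x₀ x ≤ x₀ ^ 2 / 4 :=
  max_le (by nlinarith [sq_nonneg x]) (by positivity)

lemma bump_eq_zero {x₀ x : ℝ} (h : x₀ ^ 2 / 4 ≤ x ^ 2) : bump x₀ x = 0 :=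
  max_eq_right (by linarith)

lemma bump_zero (x₀ : ℝ) : bump x₀ 0 = x₀ ^ 2 / 4 := by
  rw [bump, sq 0, mul_zero, sub_zero]
  exact max_eq_left (by positivity)

lemma sq_lt_of_bump_pos {x₀ x : ℝ} (h : 0 < bump x₀ x) : x ^ 2 < x₀ ^ 2 / 4 := by
  by_contra! hx
  exact h.ne' (bump_eq_zero hx)

lemma two_div_sq_mul_bump_sq_le (x₀ x : ℝ) : 2 / x₀ ^ 2 * bump x₀ x ^ 2 ≤ (x - x₀) ^ 2 := by
  rcases (bump_nonneg x₀ x).eq_or_lt with h | h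
  · rw [← h]; simp [sq_nonneg]
  have hx := sq_lt_of_bump_pos h
  have hx₀ : x₀ ≠ 0 := by rintro rfl; nlinarith
  have hb : bump x₀ x ^ 2 ≤ (x₀ ^ 2 / 4) ^ 2 :=
    pow_le_pow_left₀ (bump_nonneg x₀ x) (bump_le x₀ x) 2
  have hfar : x₀ ^ 2 / 4 ≤ (x - x₀) ^ 2 := by
    nlinarith [sq_nonneg (x - x₀ / 2), sq_nonneg (x + x₀ / 2)]
  calc 2 / x₀ ^ 2 * bump x₀ x ^ 2 ≤ 2 / x₀ ^ 2 * (x₀ ^ 2 / 4) ^ 2 := by gcongr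
    _ = x₀ ^ 2 / 8 := by field_simp; ring
    _ ≤ (x - x₀) ^ 2 := by nlinarith [sq_nonneg x₀]

lemma abs_bump_sq_sub_le (x₀ x : ℝ) : |bump x₀ x ^ 2 - 4 * x ^ 2 * bump x₀ x| ≤ x₀ ^ 4 / 4 := by
  have h0 := bump_nonneg x₀ x
  have h1 := bump_le x₀ x
  rcases h0.eq_or_lt with h | h
  · rw [← h]; simp; positivity
  have hx := sq_lt_of_bump_pos h
  have : 4 * x ^ 2 * bump x₀ x ≤ 4 * (x₀ ^ 2 / 4) * (x₀ ^ 2 / 4) := by gcongr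
  rw [abs_le]; constructor <;> nlinarith

lemma counterexample_mem_delta0Zero (x₀ : ℝ) : Delta0Zero (counterexample x₀) := by
  have h x := sub_nonneg.mpr (two_div_sq_mul_bump_sq_le x₀ x)
  exact ⟨fun x hx => mul_nonpos_of_nonpos_of_nonneg hx.2 (h x),
    fun x hx => mul_nonneg hx.1 (h x)⟩

lemma counterexample_hasDerivAt (x₀ x : ℝ) :
    HasDerivAt (counterexample x₀) (counterexampleDeriv x₀ x) x := by
  have hb : HasDerivAt (fun x => bump x₀ x ^ 2) (2 * bump x₀ x * (-(2 * x))) x := by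
    have := (hasDerivAt_max_zero_sq _).comp x (((hasDerivAt_pow 2 x).const_sub (x₀ ^ 2 / 4)))
    simpa [bump, Function.comp_def] using this
  have := (hasDerivAt_id x).mul
    ((((hasDerivAt_id x).sub_const x₀).pow 2).sub (hb.const_mul (2 / x₀ ^ 2)))
  exact this.congr_deriv (by simp only [counterexampleDeriv, Pi.sub_apply, Pi.pow_apply, id]; ring)

lemma contDiff_counterexample (x₀ : ℝ) : ContDiff ℝ 1 (counterexample x₀) := by
  have hb : ContDiff ℝ 1 fun x => bump x₀ x ^ 2 :=
    contDiff_max_zero_sq.comp (contDiff_const.sub (contDiff_id.pow 2))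
  exact contDiff_id.mul (((contDiff_id.sub contDiff_const).pow 2).sub (contDiff_const.mul hb))

lemma iteratedDerivWithin_one_counterexample (x₀ : ℝ) {x : ℝ} (hx : x ∈ Icc (-1 : ℝ) 1) :
    iteratedDerivWithin 1 (counterexample x₀) (Icc (-1) 1) x = counterexampleDeriv x₀ x := by
  rw [iteratedDerivWithin_one]
  exact (counterexample_hasDerivAt x₀ x).hasDerivWithinAt.derivWithin
    ((uniqueDiffOn_Icc (by norm_num)).uniqueDiffWithinAt hx)

lemma counterexample_of_abs_le {x₀ x : ℝ} (h : |x₀| ≤ |x|) :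
    counterexample x₀ x = x * (x - x₀) ^ 2 := by
  rw [counterexample, bump_eq_zero (by nlinarith [sq_abs x, sq_abs x₀, abs_nonneg x₀])]
  ring

lemma counterexampleDeriv_zero {x₀ : ℝ} (hx₀ : x₀ ≠ 0) :
    counterexampleDeriv x₀ 0 = x₀ ^ 2 - x₀ ^ 2 / 8 := by
  rw [counterexampleDeriv, bump_zero]
  field_simp
  ring

lemma abs_thirdDifference_counterexampleDeriv_le (x₀ x h : ℝ) :
    |counterexampleDeriv x₀ (x + 3 * h) - 3 * counterexampleDeriv x₀ (x + 2 * h)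
      + 3 * counterexampleDeriv x₀ (x + h) - counterexampleDeriv x₀ x| ≤ 4 * x₀ ^ 2 := by
  set w := fun y => bump x₀ y ^ 2 - 4 * y ^ 2 * bump x₀ y
  have hw y : |w y| ≤ x₀ ^ 4 / 4 := abs_bump_sq_sub_le x₀ y
  -- the quadratic part of `counterexampleDeriv` has vanishing third difference
  have hdiff : counterexampleDeriv x₀ (x + 3 * h) - 3 * counterexampleDeriv x₀ (x + 2 * h)
      + 3 * counterexampleDeriv x₀ (x + h) - counterexampleDeriv x₀ x
      = -(2 / x₀ ^ 2) * (w (x + 3 * h) - 3 * w (x + 2 * h) + 3 * w (x + h) - w x) := by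
    simp only [counterexampleDeriv, w]; ring
  have hsum : |w (x + 3 * h) - 3 * w (x + 2 * h) + 3 * w (x + h) - w x| ≤ 2 * x₀ ^ 4 := by
    have := hw x; have := hw (x + h); have := hw (x + 2 * h); have := hw (x + 3 * h)
    rw [abs_le] at *; constructor <;> linarith
  rw [hdiff, abs_mul, abs_neg, abs_of_nonneg (by positivity)]
  calc 2 / x₀ ^ 2 * |w (x + 3 * h) - 3 * w (x + 2 * h) + 3 * w (x + h) - w x|
      ≤ 2 / x₀ ^ 2 * (2 * x₀ ^ 4) := by gcongr
    _ = 4 * x₀ ^ 2 := by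
      rcases eq_or_ne x₀ 0 with rfl | hx₀
      · simp
      · field_simp; ring

lemma omegaK_counterexample_le (x₀ : ℝ) :
    omegaK (iteratedDerivWithin 1 (counterexample x₀) (Icc (-1) 1)) 3 1 (-1) 1 ≤ 4 * x₀ ^ 2 := by
  refine omegaK_le (by positivity) fun h x h0 _ hx hxh => ?_
  push_cast at hxh
  have e (y : ℝ) (hy₀ : -1 ≤ y) (hy₁ : y ≤ 1) :=
    iteratedDerivWithin_one_counterexample x₀ (show y ∈ Icc (-1 : ℝ) 1 from ⟨hy₀, hy₁⟩)
  rw [sum_range_four_thirdDifference, e x (by linarith) (by linarith),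
    e (x + h) (by linarith) (by linarith), e (x + 2 * h) (by linarith) (by linarith),
    e (x + 3 * h) (by linarith) (by linarith)]
  exact abs_thirdDifference_counterexampleDeriv_le x₀ x h

section Hermite

open Polynomial

lemma natDegree_le_of_X_sq_mul_eq {n : ℕ} (hn : 1 ≤ n) {P D : ℝ[X]} {x₀ μ : ℝ}
    (hP : P.natDegree ≤ n) (hD : P - X * (X - C x₀) ^ 2 + C μ * X = X ^ 2 * D) :
    D.natDegree ≤ n := by
  rcases eq_or_ne D 0 with rfl | hD0
  · simp
  have hcubic : (X * (X - C x₀) ^ 2 : ℝ[X]).natDegree ≤ 3 := by compute_degree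
  have hle : (X ^ 2 * D).natDegree ≤ max n 3 := by
    rw [← hD]
    refine (natDegree_add_le _ _).trans (max_le ((natDegree_sub_le _ _).trans ?_) ?_)
    · exact max_le (hP.trans (le_max_left _ _)) (hcubic.trans (le_max_right _ _))
    · exact natDegree_C_mul_le _ _ |>.trans (by simp)
  rw [natDegree_mul (pow_ne_zero 2 X_ne_zero) hD0, natDegree_X_pow] at hle
  omega

lemma eval_of_X_sq_mul_eq {P D : ℝ[X]} {x₀ μ : ℝ}
    (hD : P - X * (X - C x₀) ^ 2 + C μ * X = X ^ 2 * D) (y : ℝ) :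
    y ^ 2 * D.eval y = P.eval y - y * (y - x₀) ^ 2 + μ * y := by
  simpa using (congrArg (eval y) hD).symm

lemma sq_abs_mul_abs_eval_le {P D : ℝ[X]} {x₀ μ E y : ℝ}
    (hD : P - X * (X - C x₀) ^ 2 + C μ * X = X ^ 2 * D) (hμ : 0 ≤ μ) (hy : |x₀| ≤ |y|)
    (hE : |counterexample x₀ y - P.eval y| ≤ E) : |y| ^ 2 * |D.eval y| ≤ E + μ * |y| := by
  rw [sq_abs, ← abs_of_nonneg (sq_nonneg y), ← abs_mul, eval_of_X_sq_mul_eq hD,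
    ← counterexample_of_abs_le hy]
  calc |P.eval y - counterexample x₀ y + μ * y|
      ≤ |counterexample x₀ y - P.eval y| + |μ * y| := by
        rw [abs_sub_comm]; exact abs_add_le _ _
    _ ≤ E + μ * |y| := by
        rw [abs_mul, abs_of_nonneg hμ]
        gcongr

lemma lower_bound_of_hermite_interpolation {n : ℕ} (hn : 1 ≤ n) {x₀ E : ℝ} (hx₀ : 0 < x₀)
    (hx₀n : x₀ ≤ 1 / (n + 1)) {P : ℝ[X]} (hdeg : P.natDegree ≤ n) (hpos : 0 ≤ P.eval x₀)
    (h₀ : P.eval 0 = 0) (h₁ : (derivative P).eval 0 = counterexampleDeriv x₀ 0)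
    (hE : ∀ x ∈ Icc (-1 : ℝ) 0, |counterexample x₀ x - P.eval x| ≤ E) :
    x₀ / 8 ≤ (n + 1) * ((2 * (n + 1)) ^ n * ((n + 1) ^ 2 * E + (n + 1) * (x₀ ^ 2 / 8))) := by
  set μ := x₀ ^ 2 / 8
  have hκ : (0 : ℝ) < n + 1 := by positivity
  rw [counterexampleDeriv_zero hx₀.ne'] at h₁
  obtain ⟨D, hD⟩ : X ^ 2 ∣ P - X * (X - C x₀) ^ 2 + C μ * X :=
    X_sq_dvd_of_eval_zero (by simp [h₀]) (by simp [derivative_mul, h₁, μ])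
  have hDx₀ : x₀ / 8 ≤ D.eval x₀ := by
    have := eval_of_X_sq_mul_eq hD x₀
    rw [sub_self, sq 0, mul_zero, mul_zero, sub_zero] at this
    refine le_of_mul_le_mul_left ?_ (by positivity : 0 < x₀ ^ 2)
    rw [this]
    linarith [show μ * x₀ = x₀ ^ 2 * (x₀ / 8) by ring]
  have hE₀ : 0 ≤ E := (abs_nonneg _).trans (hE 0 (by norm_num))
  have hDnode : ∀ j ≤ n, |D.eval (-((j : ℝ) + 1) / (n + 1))| ≤ (n + 1) ^ 2 * E + (n + 1) * μ := by
    intro j hj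
    set y := -((j : ℝ) + 1) / (n + 1)
    have hj : (j : ℝ) ≤ n := by exact_mod_cast hj
    have hy₀ : y < 0 := div_neg_of_neg_of_pos (by linarith) hκ
    have hy₁ : -1 ≤ y := by rw [le_div_iff₀ hκ]; linarith
    have hyκ : 1 ≤ (n + 1) * |y| := by
      rw [abs_of_neg hy₀, mul_neg, mul_div_cancel₀ _ hκ.ne']; linarith
    have hx₀y : |x₀| ≤ |y| := by
      rw [abs_of_pos hx₀]; exact hx₀n.trans ((div_le_iff₀ hκ).mpr (by linarith))
    exact le_of_sq_mul_le hE₀ (by positivity) (abs_pos.mpr hy₀.ne) hyκ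
      (sq_abs_mul_abs_eval_le hD (by positivity) hx₀y (hE y ⟨hy₁, hy₀.le⟩))
  have := abs_eval_le_of_abs_eval_neg_nodes_le (natDegree_le_of_X_sq_mul_eq hn hdeg hD)
    (x := x₀) ⟨by linarith, by linarith [hx₀n.trans (div_le_one_of_le₀ (by linarith) hκ.le)]⟩ hDnode
  exact hDx₀.trans ((le_abs_self _).trans this)

end Hermite

/-- Copositive approximation with interpolation at `Y_s = {0}`, negative result for
`f ∈ C¹`: for any `n ∈ ℕ` and `A > 0`, there is `f ∈ C¹[-1,1] ∩ Δ^(0)({0})` such that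
any polynomial of degree ≤ n, nonnegative on `(0, 1/n)`, with `P_n(0) = f(0)` and
`P_n'(0) = f'(0)`, satisfies `‖f - P_n‖ > A ω₃(f', 1)`. -/
theorem statement14 (n : ℕ) (hn : 1 ≤ n) (A : ℝ) (hA : 0 < A) :
    ∃ f : ℝ → ℝ, ContDiffOn ℝ 1 f (Set.Icc (-1 : ℝ) 1) ∧ Delta0Zero f ∧
      ∀ P : Polynomial ℝ, P.natDegree ≤ n →
        (∀ x ∈ Set.Ioo (0 : ℝ) (1 / n : ℝ), 0 ≤ P.eval x) →
        P.eval 0 = f 0 →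
        (Polynomial.derivative P).eval 0
          = iteratedDerivWithin 1 f (Set.Icc (-1 : ℝ) 1) 0 →
        A * omegaK (iteratedDerivWithin 1 f (Set.Icc (-1 : ℝ) 1)) 3 1 (-1) 1
          < supNorm (fun x => f x - P.eval x) (-1) 1 := by
  set κ : ℝ := n + 1
  set C : ℝ := κ * (2 * κ) ^ n * (32 * A * κ ^ 2 + κ)
  have hκ : 0 < κ := by positivity
  have hC : 0 < C := by positivity
  set x₀ := 1 / (C + κ)
  have hx₀ : 0 < x₀ := by positivity
  have hx₀κ : x₀ ≤ 1 / κ := one_div_le_one_div_of_le hκ (by linarith)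
  refine ⟨counterexample x₀, (contDiff_counterexample x₀).contDiffOn,
    counterexample_mem_delta0Zero x₀, fun P hdeg hpos hP₀ hP₁ => ?_⟩
  rw [iteratedDerivWithin_one_counterexample x₀ (by norm_num)] at hP₁
  have hx₀n : x₀ < 1 / n :=
    hx₀κ.trans_lt (one_div_lt_one_div_of_lt (by exact_mod_cast hn) (by simp [κ]))
  have hcont : ContinuousOn (fun x => counterexample x₀ x - P.eval x) (Icc (-1) 1) :=
    ((contDiff_counterexample x₀).continuous.sub P.continuous).continuousOn
  have hkey := lower_bound_of_hermite_interpolation hn hx₀ hx₀κ hdeg (hpos x₀ ⟨hx₀, hx₀n⟩)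
    (by simpa [counterexample] using hP₀) hP₁
    fun x hx => abs_le_supNorm hcont ⟨hx.1, hx.2.trans zero_le_one⟩
  by_contra! hle
  have hE := hle.trans (mul_le_mul_of_nonneg_left (omegaK_counterexample_le x₀) hA.le)
  -- with `E ≤ 4 A x₀²`, `hkey` reads `x₀ / 8 ≤ C x₀² / 8`, while `x₀ C < 1` by the choice of `x₀`
  have h1 : x₀ / 8 * 1 ≤ x₀ / 8 * (x₀ * C) :=
    calc x₀ / 8 * 1 ≤ κ * ((2 * κ) ^ n * (κ ^ 2 * _ + κ * (x₀ ^ 2 / 8))) := by simpa using hkey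
      _ ≤ κ * ((2 * κ) ^ n * (κ ^ 2 * (A * (4 * x₀ ^ 2)) + κ * (x₀ ^ 2 / 8))) := by gcongr
      _ = x₀ / 8 * (x₀ * C) := by ring
  have h2 : x₀ * (C + κ) = 1 := one_div_mul_cancel (by positivity)
  nlinarith [le_of_mul_le_mul_left h1 (by positivity)]
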